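/- arXiv:1807.05000 — 2 statements merged into one kernel-verified Lean document; each statement's English description precedes it below -/
import Mathlib

section
/- Let s(u) = Σ_{z=0}^{⌊u/2⌋} 4^z·C(u−2z, z). Then for all integers m ≥ 4, s(m) + 3·s(m−2) + 4·s(m−4) = 2^m. -/
open Finset

/-- `s u = Σ_{z=0}^{⌊u/2⌋} 4^z · C(u−2z, z)`. -/
def s (u : ℕ) : ℕ := ∑ z ∈ Finset.range (u / 2 + 1), 4 ^ z * Nat.choose (u - 2 * z) z

/-! Both sides of the identity satisfy the recurrence `a (n + 3) = a (n + 2) + 4 a n` (for `2 ^ n`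
because `2` is a root of `x³ - x² - 4`), and they agree for `m = 4, 5, 6`. The recurrence for `s`
is Pascal's rule applied termwise. -/

lemma eq_of_recurrence_three {α : Type*} (F : α → α → α → α) {f g : ℕ → α}
    (hf : ∀ n, f (n + 3) = F (f n) (f (n + 1)) (f (n + 2)))
    (hg : ∀ n, g (n + 3) = F (g n) (g (n + 1)) (g (n + 2)))
    (h0 : f 0 = g 0) (h1 : f 1 = g 1) (h2 : f 2 = g 2) : f = g := by
  have agree_on_windows : ∀ n, f n = g n ∧ f (n + 1) = g (n + 1) ∧ f (n + 2) = g (n + 2) := by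
    intro n
    induction n with
    | zero => exact ⟨h0, h1, h2⟩
    | succ n ih =>
      obtain ⟨e0, e1, e2⟩ := ih
      exact ⟨e1, e2, by rw [hf, hg, e0, e1, e2]⟩
  exact funext fun n => (agree_on_windows n).1

lemma s_eq_sum_range {u N : ℕ} (h : u / 2 + 1 ≤ N) :
    s u = ∑ z ∈ range N, 4 ^ z * (u - 2 * z).choose z := by
  refine sum_subset (range_subset_range.2 h) fun z _ hz => ?_
  rw [mem_range, not_lt] at hz
  rw [show u - 2 * z = 0 by omega, Nat.choose_eq_zero_of_lt (by omega), mul_zero]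

lemma choose_succ_sub_two_mul (n z : ℕ) :
    (n + 1 - 2 * z).choose (z + 1) = (n - 2 * z).choose (z + 1) + (n - 2 * z).choose z := by
  rcases le_or_gt (2 * z) n with h | h
  · rw [show n + 1 - 2 * z = n - 2 * z + 1 by omega, Nat.choose_succ_succ, add_comm]
  · rw [show n + 1 - 2 * z = 0 by omega, show n - 2 * z = 0 by omega,
      Nat.choose_eq_zero_of_lt (by omega), Nat.choose_eq_zero_of_lt (by omega)]

lemma s_add_three (n : ℕ) : s (n + 3) = s (n + 2) + 4 * s n := by
  rw [s_eq_sum_range (N := n + 2) (by omega), s_eq_sum_range (u := n + 2) (N := n + 2) (by omega),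
    s_eq_sum_range (N := n + 1) (by omega), sum_range_succ', sum_range_succ' _ (n + 1), mul_sum]
  have termwise : ∀ z ∈ range (n + 1),
      4 ^ (z + 1) * (n + 3 - 2 * (z + 1)).choose (z + 1)
        = 4 ^ (z + 1) * (n + 2 - 2 * (z + 1)).choose (z + 1) + 4 * (4 ^ z * (n - 2 * z).choose z) := by
    intro z _
    rw [show n + 3 - 2 * (z + 1) = n + 1 - 2 * z by omega,
      show n + 2 - 2 * (z + 1) = n - 2 * z by omega, choose_succ_sub_two_mul]
    ring
  rw [sum_congr rfl termwise, sum_add_distrib]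
  simp only [mul_zero, Nat.sub_zero, Nat.choose_zero_right]
  ring

theorem s_combination_eq_pow (m : ℕ) (hm : 4 ≤ m) :
    s m + 3 * s (m - 2) + 4 * s (m - 4) = 2 ^ m := by
  obtain ⟨n, rfl⟩ : ∃ n, m = n + 4 := ⟨m - 4, by omega⟩
  rw [show n + 4 - 2 = n + 2 by omega, Nat.add_sub_cancel]
  have sides_eq := eq_of_recurrence_three (fun a _ c => c + 4 * a)
    (f := fun k => s (k + 4) + 3 * s (k + 2) + 4 * s k) (g := fun k => 2 ^ (k + 4))
    (fun k => by
      rw [show k + 3 + 4 = k + 4 + 3 by rfl, show k + 3 + 2 = k + 2 + 3 by rfl,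
        s_add_three (k + 4), s_add_three (k + 2), s_add_three k]
      ring)
    (fun k => by ring) (by decide) (by decide) (by decide)
  exact congrFun sides_eq n
end

section
/- Define s̄(m,n) = Σ_{z=0}^{min{m,n}} Σ_{y=0}^{min{m,n}−z} 4^{y+z}·C(m−y−z, y)·C(n−y−z, z). Then for all integers m, n ≥ 0, s̄(m+1, n) = s̄(m,n) + 4·s̄(m−1, n−1) + ε(m,n), where ε(m,n) = [n ≥ m+1]·4^{m+1}·C(n−m−1, m+1), with [·] the indicator and with s̄ of negative arguments set to 0. -/
open Finset

/-- Binomial coefficient on the integers, with `C a b = 0` unless `0 ≤ b ≤ a`. -/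
def C (a b : ℤ) : ℚ := if 0 ≤ b ∧ b ≤ a then (Nat.choose a.toNat b.toNat : ℚ) else 0

/-- `s̄(m,n) = Σ_{z=0}^{min{m,n}} Σ_{y=0}^{min{m,n}−z} 4^{y+z}·C(m−y−z, y)·C(n−y−z, z)`,
set to `0` when `m < 0` or `n < 0`. -/
noncomputable def sbar (m n : ℤ) : ℚ :=
  if m < 0 ∨ n < 0 then 0
  else ∑ z ∈ Finset.Icc 0 (min m n), ∑ y ∈ Finset.Icc 0 (min m n - z),
    (4 : ℚ) ^ (y + z) * C (m - y - z) y * C (n - y - z) z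

/-!
Write `s̄(m,n)` as a sum of `4^{y+z} C(m-y-z, y) C(n-y-z, z)` over a square `[0,N]²` large
enough to contain its support. Pascal's rule in the first factor splits the summand of
`s̄(m+1,n)` into that of `s̄(m,n)` and a term which, after the shift `y ↦ y+1`, is `4` times the
summand of `s̄(m-1,n-1)`. Pascal's rule fails only at `m-y-z = -1`, where `C(0,0) = 1`; that
defect contributes the single term `y = 0, z = m+1`, which is `ε(m,n)`.
-/

lemma C_eq_zero {a b : ℤ} (h : b < 0 ∨ a < b) : C a b = 0 := if_neg (by omega)

lemma C_add_one (a b : ℤ) :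
    C (a + 1) b = C a b + C a (b - 1) + if a = -1 ∧ b = 0 then 1 else 0 := by
  unfold C
  split_ifs <;> first | (exfalso; omega) | skip
  · rw [show (a + 1).toNat = a.toNat + 1 by omega, show b.toNat = (b - 1).toNat + 1 by omega,
      Nat.choose_succ_succ']
    push_cast
    ring
  · obtain rfl : b = 0 := by omega
    simp
  · rw [show (a + 1).toNat = b.toNat by omega, show a.toNat = (b - 1).toNat by omega]
    simp
  · obtain rfl : a = -1 := by omega
    obtain rfl : b = 0 := by omega
    simp
  · simp

lemma sum_Icc_comp_sub_one {M : Type*} [AddCommMonoid M] {f : ℤ → M} {N : ℤ}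
    (h₀ : f (-1) = 0) (hN : f N = 0) :
    ∑ y ∈ Icc 0 N, f (y - 1) = ∑ y ∈ Icc 0 N, f y := by
  have hshift : ∑ y ∈ Icc 0 N, f (y - 1) = ∑ y ∈ Icc (-1) (N - 1), f y :=
    sum_nbij' (· - 1) (· + 1) (by intro; simp; omega) (by intro; simp; omega) (by simp)
      (by simp) (fun _ _ => rfl)
  rw [hshift, sum_subset (Icc_subset_Icc_right (by omega : N - 1 ≤ N)),
    ← sum_subset (Icc_subset_Icc_left (by omega : (-1 : ℤ) ≤ 0))]
  · intro y hy hy'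
    simp only [mem_Icc] at hy hy'
    obtain rfl : y = -1 := by omega
    exact h₀
  · intro y hy hy'
    simp only [mem_Icc] at hy hy'
    obtain rfl : y = N := by omega
    exact hN

def sbarTerm (m n y z : ℤ) : ℚ := (4 : ℚ) ^ (y + z) * C (m - y - z) y * C (n - y - z) z

lemma sbarTerm_eq_zero_of_neg {m n y z : ℤ} (hy : y < 0) : sbarTerm m n y z = 0 := by
  rw [sbarTerm, C_eq_zero (.inl hy), mul_zero, zero_mul]

lemma sbarTerm_eq_zero_of_min_lt {m n y z : ℤ} (h : min m n < y + z) : sbarTerm m n y z = 0 := by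
  rcases min_lt_iff.1 h with h | h
  · rw [sbarTerm, C_eq_zero (a := m - y - z) (by omega), mul_zero, zero_mul]
  · rw [sbarTerm, C_eq_zero (a := n - y - z) (by omega), mul_zero]

lemma sbar_eq_sum_Icc (m n : ℤ) {N : ℤ} (hN : min m n ≤ N) :
    sbar m n = ∑ z ∈ Icc 0 N, ∑ y ∈ Icc 0 N, sbarTerm m n y z := by
  have hsbar : sbar m n =
      ∑ z ∈ Icc 0 (min m n), ∑ y ∈ Icc 0 (min m n - z), sbarTerm m n y z := by
    unfold sbar sbarTerm
    split_ifs
    · rw [Icc_eq_empty (by omega), sum_empty]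
    · rfl
  rw [hsbar]
  refine sum_subset_zero_on_sdiff (Icc_subset_Icc_right hN) ?_ fun z hz => ?_
  · intro z hz
    simp only [mem_sdiff, mem_Icc] at hz
    refine sum_eq_zero fun y hy => sbarTerm_eq_zero_of_min_lt ?_
    rw [mem_Icc] at hy
    omega
  · refine sum_subset_zero_on_sdiff (Icc_subset_Icc_right (by simp at hz; omega)) ?_
      fun _ _ => rfl
    intro y hy
    simp only [mem_sdiff, mem_Icc] at hy
    exact sbarTerm_eq_zero_of_min_lt (by omega)

lemma sum_Icc_sbarTerm_sub_one {m n N z : ℤ} (hN : min m n < N) (hz : 0 ≤ z) :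
    ∑ y ∈ Icc 0 N, sbarTerm m n (y - 1) z = ∑ y ∈ Icc 0 N, sbarTerm m n y z :=
  sum_Icc_comp_sub_one (f := fun y => sbarTerm m n y z) (sbarTerm_eq_zero_of_neg (by norm_num))
    (sbarTerm_eq_zero_of_min_lt (by omega))

lemma sbarTerm_add_one_left (m n y z : ℤ) :
    sbarTerm (m + 1) n y z = sbarTerm m n y z + 4 * sbarTerm (m - 1) (n - 1) (y - 1) z +
      if y = 0 ∧ z = m + 1 then (4 : ℚ) ^ (m + 1) * C (n - m - 1) (m + 1) else 0 := by
  have hpow : (4 : ℚ) * 4 ^ (y - 1 + z) = 4 ^ (y + z) := by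
    rw [← zpow_one_add₀ (by norm_num)]
    ring_nf
  unfold sbarTerm
  rw [show m + 1 - y - z = m - y - z + 1 by ring, C_add_one,
    show m - 1 - (y - 1) - z = m - y - z by ring, show n - 1 - (y - 1) - z = n - y - z by ring]
  split_ifs with hdefect hcorner hcorner
  · obtain ⟨rfl, rfl⟩ := hcorner
    rw [C_eq_zero (by omega), C_eq_zero (by omega)]
    ring_nf
  · omega
  · omega
  · rw [← hpow]
    ring

theorem sbar_recurrence_m_general (m n : ℤ) :
    sbar (m + 1) n = sbar m n + 4 * sbar (m - 1) (n - 1) +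
      (if m + 1 ≤ n then (4 : ℚ) ^ (m + 1) * C (n - m - 1) (m + 1) else 0) := by
  obtain ⟨N, hN, hN₀⟩ : ∃ N : ℤ, m + 1 ≤ N ∧ 0 ≤ N := ⟨max (m + 1) 0, by omega, by omega⟩
  have hε : (if m + 1 ≤ n then (4 : ℚ) ^ (m + 1) * C (n - m - 1) (m + 1) else 0) =
      (4 : ℚ) ^ (m + 1) * C (n - m - 1) (m + 1) :=
    ite_eq_left_iff.2 fun h => by rw [C_eq_zero (by omega), mul_zero]
  have hcorner : ∑ z ∈ Icc 0 N, ∑ y ∈ Icc 0 N,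
      (if y = 0 ∧ z = m + 1 then (4 : ℚ) ^ (m + 1) * C (n - m - 1) (m + 1) else 0) =
      (4 : ℚ) ^ (m + 1) * C (n - m - 1) (m + 1) := by
    simp only [ite_and, sum_ite_eq', mem_Icc, le_refl, hN₀, hN, and_true, if_true]
    exact ite_eq_left_iff.2 fun h => by rw [C_eq_zero (by omega), mul_zero]
  rw [sbar_eq_sum_Icc _ _ (min_le_of_left_le hN),
    sbar_eq_sum_Icc _ _ (min_le_of_left_le (by omega : m ≤ N)),
    sbar_eq_sum_Icc _ _ (min_le_of_left_le (by omega : m - 1 ≤ N))]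
  have hshift : ∀ z ∈ Icc 0 N, ∑ y ∈ Icc 0 N, sbarTerm (m - 1) (n - 1) (y - 1) z =
      ∑ y ∈ Icc 0 N, sbarTerm (m - 1) (n - 1) y z := fun z hz =>
    sum_Icc_sbarTerm_sub_one (min_lt_of_left_lt (by omega)) (mem_Icc.1 hz).1
  simp only [sbarTerm_add_one_left, sum_add_distrib, ← mul_sum, sum_congr rfl hshift, hcorner, hε]

theorem sbar_recurrence_m (m n : ℤ) (hm : 0 ≤ m) (hn : 0 ≤ n) :
    sbar (m + 1) n = sbar m n + 4 * sbar (m - 1) (n - 1) +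
      (if m + 1 ≤ n then (4 : ℚ) ^ (m + 1) * C (n - m - 1) (m + 1) else 0) :=
  sbar_recurrence_m_general m n
end
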